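/- arXiv:1310.2101 — 2 statements merged into one kernel-verified Lean document; each statement's English description precedes it below -/
import Mathlib

section
/- In the differential setting, assume condition (C2). Set γ_{ij} := r_{ij} for i ≠ j, γ_{ii} := 0, and H_j := (1/2) Σ_{k≠j} (u_j − u_k) γ_{jk}². Then for all i ≠ j, the coefficient function G_{ij}^{(2)} of the genus-2 G-function, namely G_{ij}^{(2)} := − γ_{ij}² H_j/(120 h_j²) + γ_{ij}³/(480 h_i h_j) − (γ_{ij}/5760) ( (∂γ_{ij}/∂u_i)/h_i² + (∂γ_{ij}/∂u_j)/h_j² ) + (γ_{ij}²/5760) ( (∂h_i/∂u_i)/h_i³ + 3 (∂h_j/∂u_j)/h_j³ ) + Σ_k ( γ_{ij} γ_{ik} γ_{jk}/(5760 h_k²) + (γ_{ij}²/(5760 h_k)) ( γ_{jk}/h_j − γ_{ik}/h_i ) ), vanishes identically on U. -/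
open Finset

/-- Partial derivative of `f` in the `j`-th coordinate direction at `x`. -/
noncomputable def pd {N : ℕ} (f : (Fin N → ℝ) → ℝ) (j : Fin N) (x : Fin N → ℝ) : ℝ :=
  fderiv ℝ f x (Pi.single j 1)

theorem Gij2_vanishes
    (N : ℕ) (hN : 2 ≤ N)
    (U : Set (Fin N → ℝ)) (hUopen : IsOpen U) (hUconn : IsConnected U)
    (hdist : ∀ x ∈ U, ∀ i j : Fin N, i ≠ j → x i ≠ x j)
    (h : Fin N → (Fin N → ℝ) → ℝ)
    (hsmooth : ∀ i, ContDiffOn ℝ (⊤ : ℕ∞) (h i) U)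
    (hne : ∀ i, ∀ x ∈ U, h i x ≠ 0)
    (r : Fin N → Fin N → (Fin N → ℝ) → ℝ)
    (rsmooth : ∀ i j, ContDiffOn ℝ (⊤ : ℕ∞) (r i j) U)
    (rsymm : ∀ i j, r i j = r j i)
    (hb : ∀ i j, ∀ x ∈ U, pd (h i) j x = r i j x * h j x)
    (hstring : ∀ i, ∀ x ∈ U, ∑ j, r i j x * h j x = 0)
    (v : Fin N → Fin N → (Fin N → ℝ) → ℝ)
    (hv : ∀ i j, ∀ x ∈ U, v i j x = (x j - x i) * r i j x)
    (θ : Fin N → Fin N → (Fin N → ℝ) → ℝ)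
    (hθ : ∀ i j, i ≠ j → ∀ x ∈ U,
      θ i j x = (r i j x + ∑ k, r i k x * v j k x) / (x j - x i))
    (Ω : Fin N → Fin N → (Fin N → ℝ) → ℝ)
    (hΩ : ∀ i j, i ≠ j → ∀ x ∈ U,
      Ω i j x = (θ i j x - θ j i x + ∑ k, ∑ l, r i l x * r j k x * v k l x) / (x j - x i))
    (hc : ∀ i j k : Fin N, i ≠ j → j ≠ k → i ≠ k → ∀ x ∈ U,
      pd (r i j) k x = r i k x * r j k x)
    (hd : ∀ i j, i ≠ j → ∀ x ∈ U, pd (r i j) i x = r i i x * r i j x + θ i j x)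
    (he : ∀ i k, k ≠ i → ∀ x ∈ U,
      pd (r i i) k x = (r i k x) ^ 2 + (h k x / h i x) * θ i k x)
    (hf : ∀ i, ∀ x ∈ U, pd (r i i) i x =
      (r i i x) ^ 2 - 2 * ∑ l, (r i l x) ^ 2
        + ∑ p ∈ univ.filter (fun p => p ≠ i), (h p x / h i x) * θ p i x)
    (hG1 : ∀ i, ∀ x ∈ U,
      ∑ j, r i j x * v i j x = -(1/12) * ∑ j, r i j x * h i x / h j x)
    (hG2 : ∀ i j, i ≠ j → ∀ x ∈ U,
      θ i j x * h j x / h i x + θ j i x * h i x / h j x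
        = 12 * (r i j x) ^ 2
          + ∑ l, (r i l x * r j l x * h i x * h j x / (h l x) ^ 2
              - r i j x * r i l x * h j x / h l x - r i j x * r j l x * h i x / h l x))
    (γ : Fin N → Fin N → (Fin N → ℝ) → ℝ)
    (hγ : ∀ i j, i ≠ j → γ i j = r i j)
    (hγdiag : ∀ i, ∀ x : Fin N → ℝ, γ i i x = 0)
    (H : Fin N → (Fin N → ℝ) → ℝ)
    (hH : ∀ j, ∀ x ∈ U,
      H j x = (1/2) * ∑ k ∈ univ.filter (fun k => k ≠ j), (x j - x k) * (γ j k x) ^ 2)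
    :
    ∀ i j : Fin N, i ≠ j → ∀ x ∈ U,
      -((γ i j x) ^ 2 * H j x / (120 * (h j x) ^ 2))
        + (γ i j x) ^ 3 / (480 * h i x * h j x)
        - (γ i j x / 5760) * (pd (γ i j) i x / (h i x) ^ 2 + pd (γ i j) j x / (h j x) ^ 2)
        + ((γ i j x) ^ 2 / 5760) * (pd (h i) i x / (h i x) ^ 3 + 3 * pd (h j) j x / (h j x) ^ 3)
        + ∑ k, (γ i j x * γ i k x * γ j k x / (5760 * (h k x) ^ 2)
            + ((γ i j x) ^ 2 / (5760 * h k x)) * (γ j k x / h j x - γ i k x / h i x))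
      = 0 := by

  intro i j hij x hx
  have hij' : j ≠ i := hij.symm
  have ha : h i x ≠ 0 := hne i x hx
  have hb0 : h j x ≠ 0 := hne j x hx
  have hγij : γ i j = r i j := hγ i j hij
  have pd2 : pd (r i j) j x = r j j x * r i j x + θ j i x := by
    rw [rsymm i j]; exact hd j i hij' x hx
  have pdh1 : pd (h i) i x / (h i x) ^ 3 = r i i x / (h i x) ^ 2 := by
    rw [hb i i x hx]; field_simp
  have pdh2 : 3 * pd (h j) j x / (h j x) ^ 3 = 3 * r j j x / (h j x) ^ 2 := by
    rw [hb j j x hx]; field_simp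
  have hHval : H j x = (1/24) * ∑ k, r j k x * h j x / h k x := by
    rw [hH j x hx, Finset.sum_filter]
    have h1 : ∀ k ∈ univ,
        (if k ≠ j then (x j - x k) * (γ j k x) ^ 2 else 0) = -(r j k x * v j k x) := by
      intro k _
      by_cases hk : k = j
      · subst hk; simp [hv k k x hx]
      · rw [if_pos hk, hγ j k (Ne.symm hk), hv j k x hx]; ring
    rw [Finset.sum_congr rfl h1, Finset.sum_neg_distrib, hG1 j x hx]
    ring
  have hsum : (∑ k, (r i j x * γ i k x * γ j k x / (5760 * (h k x) ^ 2)
        + ((r i j x) ^ 2 / (5760 * h k x)) * (γ j k x / h j x - γ i k x / h i x)))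
      = (∑ k, (r i j x * r i k x * r j k x / (5760 * (h k x) ^ 2)
        + ((r i j x) ^ 2 / (5760 * h k x)) * (r j k x / h j x - r i k x / h i x)))
        + (- (2 * (r i j x) ^ 2 * r j j x / (5760 * (h j x) ^ 2))) := by
    have h1 : ∀ k ∈ univ,
        (r i j x * γ i k x * γ j k x / (5760 * (h k x) ^ 2)
          + ((r i j x) ^ 2 / (5760 * h k x)) * (γ j k x / h j x - γ i k x / h i x))
        = (r i j x * r i k x * r j k x / (5760 * (h k x) ^ 2)
          + ((r i j x) ^ 2 / (5760 * h k x)) * (r j k x / h j x - r i k x / h i x))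
          + (if k = j then - (2 * (r i j x) ^ 2 * r j j x / (5760 * (h j x) ^ 2)) else 0) := by
      intro k _
      by_cases hkj : k = j
      · subst hkj
        rw [if_pos rfl, hγdiag, hγij]
        field_simp
        ring
      · rw [if_neg hkj, add_zero]
        by_cases hki : k = i
        · subst hki
          rw [hγdiag, hγ j k hij', rsymm j k]
          field_simp
          ring
        · rw [hγ i k (Ne.symm hki), hγ j k (Ne.symm hkj)]
    rw [Finset.sum_congr rfl h1, Finset.sum_add_distrib, Finset.sum_ite_eq' univ j]
    simp
  have hSg : (∑ k, (r i j x * r i k x * r j k x / (5760 * (h k x) ^ 2)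
        + ((r i j x) ^ 2 / (5760 * h k x)) * (r j k x / h j x - r i k x / h i x)))
      = (r i j x) ^ 2 / (2880 * (h j x) ^ 2) * (∑ k, r j k x * h j x / h k x)
        + r i j x / (5760 * (h i x * h j x)) *
          (∑ l, (r i l x * r j l x * h i x * h j x / (h l x) ^ 2
            - r i j x * r i l x * h j x / h l x - r i j x * r j l x * h i x / h l x)) := by
    rw [Finset.mul_sum, Finset.mul_sum, ← Finset.sum_add_distrib]
    refine Finset.sum_congr rfl (fun k _ => ?_)
    have hk0 : h k x ≠ 0 := hne k x hx
    field_simp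
    ring
  have hg2 := hG2 i j hij x hx
  have hθval : θ i j x / (h i x) ^ 2 + θ j i x / (h j x) ^ 2
      = (12 * (r i j x) ^ 2
          + ∑ l, (r i l x * r j l x * h i x * h j x / (h l x) ^ 2
            - r i j x * r i l x * h j x / h l x - r i j x * r j l x * h i x / h l x))
        / (h i x * h j x) := by
    rw [← hg2]
    field_simp
  rw [hγij, hd i j hij x hx, pd2, pdh1, pdh2, hHval, hsum, hSg]
  linear_combination (-(r i j x) / 5760) * hθval
end

section
/- In the differential setting, assume conditions (C1) and (C2). Then for every index i, identically on U, the coefficient function G_i^{(2)} of the genus-2 G-function vanishes; explicitly, [ Σ_{k≠i} θ_{ik}/(5760 h_i h_k) − r_{ii}²/(1440 h_i²) − Σ_k r_{ik}²/(1920 h_k²) + Σ_k r_{ii} r_{ik}/(1440 h_i h_k) ] + [ Σ_{k≠i} θ_{ik}/(2880 h_i h_k) − Σ_{k≠i} θ_{ki} h_k/(384 h_i³) + Σ_{k≠i} 7 θ_{ki}/(2880 h_i h_k) − Σ_j 17 r_{ii} r_{ij}/(2880 h_i h_j) + Σ_k r_{ik} r_{kk} h_i/(1440 h_k³) − Σ_k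 19 r_{ik}²/(720 h_i²) + Σ_k r_{ik}²/(1440 h_k²) + Σ_{j,k} r_{ik} r_{ij}/(2880 h_j h_k) + Σ_{j,k} 7 r_{ik} r_{jk}/(2880 h_i h_j) − Σ_{k,l} h_i r_{il} r_{kl}/(2880 h_k h_l²) + 23 r_{ii}²/(720 h_i²) ] = 0. -/
open Finset

variable {N : ℕ} {x : Fin N → ℝ} {f g : (Fin N → ℝ) → ℝ} {j : Fin N}

lemma pd_congr {U : Set (Fin N → ℝ)} (hU : IsOpen U) (hx : x ∈ U)
    (hfg : ∀ y ∈ U, f y = g y) : pd f j x = pd g j x := by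
  unfold pd
  rw [Filter.EventuallyEq.fderiv_eq (by filter_upwards [hU.mem_nhds hx] using hfg)]

lemma pd_const (c : ℝ) : pd (fun _ : Fin N → ℝ => c) j x = 0 := by
  simp [pd]

lemma pd_sum {ι : Type*} (s : Finset ι) (F : ι → (Fin N → ℝ) → ℝ)
    (hF : ∀ i ∈ s, DifferentiableAt ℝ (F i) x) :
    pd (fun y => ∑ i ∈ s, F i y) j x = ∑ i ∈ s, pd (F i) j x := by
  unfold pd
  rw [fderiv_fun_sum hF]
  simp

lemma pd_mul (hf : DifferentiableAt ℝ f x) (hg : DifferentiableAt ℝ g x) :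
    pd (fun y => f y * g y) j x = pd f j x * g x + f x * pd g j x := by
  unfold pd
  rw [fderiv_fun_mul hf hg]
  simp
  ring

lemma pd_inv (hf : DifferentiableAt ℝ f x) (hfx : f x ≠ 0) :
    pd (fun y => (f y)⁻¹) j x = -pd f j x / (f x) ^ 2 := by
  have H : HasFDerivAt (fun y => (f y)⁻¹)
      ((-ContinuousLinearMap.mulLeftRight ℝ ℝ (f x)⁻¹ (f x)⁻¹).comp (fderiv ℝ f x)) x :=
    (hasFDerivAt_inv' hfx).comp x hf.hasFDerivAt
  unfold pd
  rw [H.fderiv]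
  simp only [ContinuousLinearMap.comp_apply, ContinuousLinearMap.neg_apply,
    ContinuousLinearMap.mulLeftRight_apply]
  rw [sq]
  field_simp

lemma pd_div (hf : DifferentiableAt ℝ f x) (hg : DifferentiableAt ℝ g x) (hgx : g x ≠ 0) :
    pd (fun y => f y / g y) j x = (pd f j x * g x - f x * pd g j x) / (g x) ^ 2 := by
  have : (fun y => f y / g y) = (fun y => f y * (g y)⁻¹) := by
    funext y; rw [div_eq_mul_inv]
  rw [this, pd_mul (g := fun y => (g y)⁻¹) hf (hg.inv hgx), pd_inv hg hgx]
  field_simp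
  ring

lemma diffAt_div (hf : DifferentiableAt ℝ f x) (hg : DifferentiableAt ℝ g x)
    (hgx : g x ≠ 0) : DifferentiableAt ℝ (fun y => f y / g y) x := by
  have e : (fun y => f y / g y) = fun y => f y * (g y)⁻¹ :=
    funext fun y => div_eq_mul_inv _ _
  rw [e]
  exact hf.mul (hg.inv hgx)

lemma pd_sub (hf : DifferentiableAt ℝ f x) (hg : DifferentiableAt ℝ g x) :
    pd (fun y => f y - g y) j x = pd f j x - pd g j x := by
  unfold pd
  rw [fderiv_fun_sub hf hg]
  simp

lemma pd_const_mul (c : ℝ) (hf : DifferentiableAt ℝ f x) :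
    pd (fun y => c * f y) j x = c * pd f j x := by
  unfold pd
  rw [fderiv_const_mul hf]
  simp


variable {N : ℕ}

lemma sum_split_one (i : Fin N) (f : Fin N → ℝ) :
    ∑ j, f j = f i + ∑ j ∈ univ.erase i, f j :=
  (Finset.add_sum_erase _ f (mem_univ i)).symm

lemma erase_full (i : Fin N) (f : Fin N → ℝ) :
    ∑ j ∈ univ.erase i, f j = (∑ j, f j) - f i :=
  Finset.sum_erase_eq_sub (mem_univ i)

lemma sum_split_two {i k : Fin N} (hik : k ≠ i) (f : Fin N → ℝ) :
    ∑ j, f j = f i + (f k + ∑ j ∈ (univ.erase i).erase k, f j) := by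
  rw [sum_split_one i f, Finset.add_sum_erase _ f (mem_erase.mpr ⟨hik, mem_univ k⟩)]

example (a b : ℝ) (hb : b ≠ 0) : (a/b)^2 = a^2/b^2 := by ring
example (a b c : ℝ) : a*b/(c^3) = (1/c^2)*((b/c)*a) := by ring

set_option maxHeartbeats 1000000 in
lemma D_algebra (i : Fin N) (H : Fin N → ℝ) (R : Fin N → Fin N → ℝ)
    (A B : Fin N → ℝ) (DD : Fin N → Fin N → ℝ)
    (h0 : ∀ p, H p ≠ 0) (sym : ∀ p q, R p q = R q p)
    (hDii : DD i i = (R i i)^2 - 2*∑ l, (R i l)^2 + ∑ p ∈ univ.erase i, (H p/H i)*B p)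
    (hDiq : ∀ q, q ≠ i → DD i q = R i i * R i q + A q)
    (hDpi : ∀ p, p ≠ i → DD p i = R i i * R i p + A p)
    (hDpp : ∀ p, p ≠ i → DD p p = (R i p)^2 + (H i/H p)*B p)
    (hDoff : ∀ p q, p ≠ i → q ≠ i → p ≠ q → DD p q = R i p * R i q)
    (raw : (∑ p, ∑ q, (DD p q/(H p*H q) - R p q*R p i*H i/((H p)^2*H q)
              - R p q*R q i*H i/(H p*(H q)^2)))
        - 2*∑ p, (DD p p/(H p)^2 - 2*R p p*R p i*H i/(H p)^3) = 0) :
    ∑ k ∈ univ.erase i, (2*A k/(H i*H k) - B k*H k/(H i)^3 - B k*H i/(H k)^3)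
      = -(∑ l, R i l/H l)^2 - 2*(∑ l, (R i l)^2)/(H i)^2 + 2*∑ l, (R i l)^2/(H l)^2
        + 2*H i*(∑ k, ∑ l, R i k*R k l/((H k)^2*H l)) - 4*H i*∑ p, R i p*R p p/(H p)^3 := by
  set X := ∑ l, R i l/H l with hX
  set M6 := ∑ l, (R i l)^2 with hM6
  set M5 := ∑ l, (R i l)^2/(H l)^2 with hM5
  set M10 := ∑ p, R i p*R p p/(H p)^3 with hM10
  set M12 := ∑ k, ∑ l, R i k*R k l/((H k)^2*H l) with hM12
  set SA := ∑ q ∈ univ.erase i, A q/(H i*H q) with hSA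
  set SB1 := ∑ p ∈ univ.erase i, (H p/H i)*B p with hSB1
  set SB2 := ∑ p ∈ univ.erase i, B p/(H p)^3 with hSB2
  have hHi := h0 i
  -- erase-sum facts
  have eX : ∑ p ∈ univ.erase i, R i p/H p = X - R i i/H i := by
    rw [erase_full, hX]
  have eM5 : ∑ p ∈ univ.erase i, (R i p)^2/(H p)^2 = M5 - (R i i)^2/(H i)^2 := by
    rw [erase_full, hM5]
  -- inner sum for p = i
  have inner_i : ∑ q, DD i q/(H i*H q)
      = R i i/H i*X - 2*M6/(H i)^2 + SB1/(H i)^2 + SA := by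
    rw [sum_split_one i (fun q => DD i q/(H i*H q))]
    have e1 : ∑ q ∈ univ.erase i, DD i q/(H i*H q)
        = ∑ q ∈ univ.erase i, ((R i i/H i)*(R i q/H q) + A q/(H i*H q)) := by
      refine Finset.sum_congr rfl fun q hq => ?_
      rw [hDiq q (mem_erase.mp hq).1]; ring
    rw [e1, Finset.sum_add_distrib, hDii]
    have e2 : ∑ q ∈ univ.erase i, (R i i/H i)*(R i q/H q)
        = (R i i/H i)*(X - R i i/H i) := by
      rw [← Finset.mul_sum, eX]
    rw [e2]
    ring
  -- inner sum for p ≠ i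
  have inner_p : ∀ p ∈ univ.erase i, ∑ q, DD p q/(H p*H q)
      = R i i*R i p/(H p*H i) + A p/(H p*H i) + (R i p)^2/(H p)^2 + H i*B p/(H p)^3
        + R i p/H p*(X - R i i/H i - R i p/H p) := by
    intro p hp
    have hpi : p ≠ i := (mem_erase.mp hp).1
    rw [sum_split_two hpi (fun q => DD p q/(H p*H q))]
    have e1 : ∑ q ∈ (univ.erase i).erase p, DD p q/(H p*H q)
        = ∑ q ∈ (univ.erase i).erase p, R i p/H p*(R i q/H q) := by
      refine Finset.sum_congr rfl fun q hq => ?_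
      have hqp : q ≠ p := (mem_erase.mp hq).1
      have hqi : q ≠ i := (mem_erase.mp (mem_erase.mp hq).2).1
      rw [hDoff p q hpi hqi (Ne.symm hqp)]; ring
    have e2 : ∑ q ∈ (univ.erase i).erase p, R i p/H p*(R i q/H q)
        = R i p/H p*(X - R i i/H i - R i p/H p) := by
      rw [← Finset.mul_sum, Finset.sum_erase_eq_sub (mem_erase.mpr ⟨hpi, mem_univ p⟩), eX]
    rw [e1, e2, hDpi p hpi, hDpp p hpi]
    ring
  -- outer sum of DD part
  have outer : ∑ p, ∑ q, DD p q/(H p*H q)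
      = (R i i/H i*X - 2*M6/(H i)^2 + SB1/(H i)^2 + SA)
        + (R i i/H i*(X - R i i/H i) + SA + (M5 - (R i i)^2/(H i)^2) + H i*SB2
           + ((X - R i i/H i)^2 - (M5 - (R i i)^2/(H i)^2))) := by
    rw [sum_split_one i (fun p => ∑ q, DD p q/(H p*H q)), inner_i]
    congr 1
    rw [Finset.sum_congr rfl inner_p]
    rw [Finset.sum_add_distrib, Finset.sum_add_distrib, Finset.sum_add_distrib,
        Finset.sum_add_distrib]
    have c1 : ∑ p ∈ univ.erase i, R i i*R i p/(H p*H i)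
        = R i i/H i*(X - R i i/H i) := by
      rw [← eX, Finset.mul_sum]
      exact Finset.sum_congr rfl fun p _ => by ring
    have c2 : ∑ p ∈ univ.erase i, A p/(H p*H i) = SA := by
      rw [hSA]; exact Finset.sum_congr rfl fun p _ => by ring
    have c3 : ∑ p ∈ univ.erase i, H i*B p/(H p)^3 = H i*SB2 := by
      rw [hSB2, Finset.mul_sum]
      exact Finset.sum_congr rfl fun p _ => by ring
    have c4 : ∑ p ∈ univ.erase i, R i p/H p*(X - R i i/H i - R i p/H p)
        = (X - R i i/H i)^2 - (M5 - (R i i)^2/(H i)^2) := by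
      have : ∀ p ∈ univ.erase i, R i p/H p*(X - R i i/H i - R i p/H p)
          = (X - R i i/H i)*(R i p/H p) - (R i p)^2/(H p)^2 := fun p _ => by ring
      rw [Finset.sum_congr rfl this, Finset.sum_sub_distrib, ← Finset.mul_sum, eX, eM5]
      ring
    rw [c1, c2, c3, c4, eM5]
  -- term2 and term3
  have t2 : ∑ p, ∑ q, R p q*R p i*H i/((H p)^2*H q) = H i*M12 := by
    rw [hM12, Finset.mul_sum]
    refine Finset.sum_congr rfl fun p _ => ?_
    rw [Finset.mul_sum]
    refine Finset.sum_congr rfl fun q _ => ?_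
    rw [sym p i, sym p q]; ring
  have t3 : ∑ p, ∑ q, R p q*R q i*H i/(H p*(H q)^2) = H i*M12 := by
    rw [Finset.sum_comm, hM12, Finset.mul_sum]
    refine Finset.sum_congr rfl fun q _ => ?_
    rw [Finset.mul_sum]
    refine Finset.sum_congr rfl fun p _ => ?_
    rw [sym q i, sym p q]; ring
  -- F2 part
  have f2 : ∑ p, (DD p p/(H p)^2 - 2*R p p*R p i*H i/(H p)^3)
      = ((R i i)^2 - 2*M6 + SB1)/(H i)^2 + (M5 - (R i i)^2/(H i)^2) + H i*SB2
        - 2*H i*M10 := by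
    rw [Finset.sum_sub_distrib]
    have g1 : ∑ p, DD p p/(H p)^2
        = ((R i i)^2 - 2*M6 + SB1)/(H i)^2 + ((M5 - (R i i)^2/(H i)^2) + H i*SB2) := by
      rw [sum_split_one i (fun p => DD p p/(H p)^2), hDii]
      congr 1
      have : ∀ p ∈ univ.erase i, DD p p/(H p)^2
          = (R i p)^2/(H p)^2 + H i*(B p/(H p)^3) := by
        intro p hp
        have hpi := (mem_erase.mp hp).1
        rw [hDpp p hpi]
        ring
      rw [Finset.sum_congr rfl this, Finset.sum_add_distrib, eM5, ← Finset.mul_sum, ← hSB2]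
    have g2 : ∑ p, 2*R p p*R p i*H i/(H p)^3 = 2*H i*M10 := by
      rw [hM10, Finset.mul_sum]
      refine Finset.sum_congr rfl fun p _ => ?_
      rw [sym p i]; ring
    rw [g1, g2]
    ring
  -- assemble raw
  have split_raw : ∑ p, ∑ q, (DD p q/(H p*H q) - R p q*R p i*H i/((H p)^2*H q)
              - R p q*R q i*H i/(H p*(H q)^2))
      = (∑ p, ∑ q, DD p q/(H p*H q)) - (∑ p, ∑ q, R p q*R p i*H i/((H p)^2*H q))
        - ∑ p, ∑ q, R p q*R q i*H i/(H p*(H q)^2) := by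
    rw [← Finset.sum_sub_distrib]
    rw [← Finset.sum_sub_distrib]
    refine Finset.sum_congr rfl fun p _ => ?_
    rw [← Finset.sum_sub_distrib, ← Finset.sum_sub_distrib]
  rw [split_raw, outer, t2, t3, f2] at raw
  -- target
  have target_split : ∑ k ∈ univ.erase i, (2*A k/(H i*H k) - B k*H k/(H i)^3 - B k*H i/(H k)^3)
      = 2*SA - SB1/(H i)^2 - H i*SB2 := by
    rw [Finset.sum_sub_distrib, Finset.sum_sub_distrib]
    have d1 : ∑ k ∈ univ.erase i, 2*A k/(H i*H k) = 2*SA := by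
      rw [hSA, Finset.mul_sum]
      exact Finset.sum_congr rfl fun k _ => by ring
    have d2 : ∑ k ∈ univ.erase i, B k*H k/(H i)^3 = SB1/(H i)^2 := by
      rw [hSB1, Finset.sum_div]
      exact Finset.sum_congr rfl fun k _ => by ring
    have d3 : ∑ k ∈ univ.erase i, B k*H i/(H k)^3 = H i*SB2 := by
      rw [hSB2, Finset.mul_sum]
      exact Finset.sum_congr rfl fun k _ => by ring
    rw [d1, d2, d3]
  rw [target_split]
  linear_combination raw

lemma S_algebra {i k : Fin N} (hik : k ≠ i)
    (H : Fin N → ℝ) (R : Fin N → Fin N → ℝ) (a b : ℝ) (P : Fin N → ℝ)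
    (h0 : ∀ p, H p ≠ 0)
    (sym : ∀ p q, R p q = R q p)
    (strk : ∑ j, R k j * H j = 0)
    (raw : ∑ j, (P j * H j + R i j * (R j k * H k)) = 0)
    (celli : P i = (R i k)^2 + (H k / H i) * a)
    (cellk : P k = R k k * R i k + b)
    (cells : ∀ j, j ≠ i → j ≠ k → P j = R i k * R j k) :
    a + b = -∑ j, R i j * R j k := by
  have base : ∑ j, R i k * R j k * H j = 0 := by
    calc ∑ j, R i k * R j k * H j = R i k * ∑ j, R k j * H j := by
          rw [Finset.mul_sum]; exact Finset.sum_congr rfl (fun j _ => by rw [sym j k]; ring)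
      _ = 0 := by rw [strk, mul_zero]
  have A1 : ∑ j, P j * H j = H k * a + H k * b + ∑ j, R i k * R j k * H j := by
    rw [sum_split_two hik (fun j => P j * H j),
        sum_split_two hik (fun j => R i k * R j k * H j), celli, cellk]
    have e : ∑ j ∈ (univ.erase i).erase k, P j * H j
        = ∑ j ∈ (univ.erase i).erase k, R i k * R j k * H j := by
      refine Finset.sum_congr rfl fun j hj => ?_
      have hjk : j ≠ k := (mem_erase.mp hj).1
      have hji : j ≠ i := (mem_erase.mp (mem_erase.mp hj).2).1
      rw [cells j hji hjk]
    rw [e]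
    have hHi := h0 i
    field_simp
    ring
  have A2 : ∑ j, R i j * (R j k * H k) = H k * ∑ j, R i j * R j k := by
    rw [Finset.mul_sum]; exact Finset.sum_congr rfl fun j _ => by ring
  have raw' : H k * (a + b + ∑ j, R i j * R j k) = 0 := by
    rw [Finset.sum_add_distrib, A1, A2, base] at raw
    linear_combination raw
  have h5 := (mul_eq_zero.mp raw').resolve_left (h0 k)
  linarith

lemma perk (hi hk a b u e : ℝ) (h1 : hi ≠ 0) (h2 : hk ≠ 0)
    (hs : a + b = -u)
    (hg : a*hk/hi + b*hi/hk = e) :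
    a/(5760*hi*hk) + a/(2880*hi*hk) + 7*b/(2880*hi*hk) - b*hk/(384*hi^3)
      = 7*hk/(2880*hi^3)*u + (7/(2880*hi^2) + 1/(5760*hk^2))*e
        + 1/5760*(2*a/(hi*hk) - b*hk/hi^3 - b*hi/hk^3) := by
  have hu : u = -(a+b) := by linarith
  rw [← hg, hu]
  field_simp
  ring

lemma E2div (hi hk rik x z y : ℝ) (h2 : hk ≠ 0) :
    (12*rik^2 + hi*hk*z - rik*hk*x - rik*hi*y)/hk^2
      = 12*rik^2/hk^2 + hi*(z/hk) - x*(rik/hk) - hi*(rik*y/hk^2) := by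
  field_simp

lemma final_scalar (hi rii x m5 m6 m10 m11 m12 m1 s1 s2 s3 s4 dsum t1 te te2 : ℝ)
    (h1 : hi ≠ 0)
    (hm : m12 = m1)
    (htheta : s1 + s2 + s3 - s4
      = 7/(2880*hi^3)*t1 + 7/(2880*hi^2)*te + 1/5760*te2 + 1/5760*dsum)
    (ht1 : t1 = -(hi*m6))
    (hte : te = 12*m6 - 12*rii^2 - hi^2*m5 + 2*rii*hi*x - hi*m11)
    (hte2 : te2 = 12*(m5 - rii^2/hi^2) + hi*(m1 - m5/hi) - x*(x - rii/hi)
      - hi*(m12 - rii*x/hi^2))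
    (hd : dsum = -x^2 - 2*m6/hi^2 + 2*m5 + 2*hi*m12 - 4*hi*m10) :
    (s1 - rii^2/(1440*hi^2) - 1/1920*m5 + rii/(1440*hi)*x)
      + (s2 - s4 + s3 - 17*rii/(2880*hi)*x + hi/1440*m10 - 19/(720*hi^2)*m6 + 1/1440*m5
        + x/2880*x + 7/(2880*hi)*m11 - hi/2880*m1 + 23*rii^2/(720*hi^2)) = 0 := by
  rw [ht1, hte, hte2, hd, hm] at htheta
  linear_combination (norm := (field_simp; ring)) htheta


lemma cellconv (dd rpq rpi rqi hi hp hq : ℝ) (hp0 : hp ≠ 0) (hq0 : hq ≠ 0) :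
    (dd * (hp * hq) - rpq * (rpi * hi * hq + hp * (rqi * hi))) / (hp * hq) ^ 2
      = dd / (hp * hq) - rpq * rpi * hi / (hp ^ 2 * hq) - rpq * rqi * hi / (hp * hq ^ 2) := by
  field_simp
  ring

lemma cellconvd (dd rpp rpi hi hp : ℝ) (hp0 : hp ≠ 0) :
    (dd * (hp * hp) - rpp * (rpi * hi * hp + hp * (rpi * hi))) / (hp * hp) ^ 2
      = dd / hp ^ 2 - 2 * rpp * rpi * hi / hp ^ 3 := by
  field_simp
  ring

set_option maxHeartbeats 1600000 in
lemma final_algebra (i : Fin N) (H : Fin N → ℝ) (R : Fin N → Fin N → ℝ) (A B : Fin N → ℝ)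
    (h0 : ∀ p, H p ≠ 0) (sym : ∀ p q, R p q = R q p)
    (str : ∀ p, ∑ j, R p j * H j = 0)
    (S : ∀ k, k ≠ i → A k + B k = -∑ j, R i j * R j k)
    (G2 : ∀ k, k ≠ i → A k * H k / H i + B k * H i / H k
        = 12 * (R i k) ^ 2
          + ∑ l, (R i l * R k l * H i * H k / (H l) ^ 2
              - R i k * R i l * H k / H l - R i k * R k l * H i / H l))
    (D : ∑ k ∈ univ.erase i, (2 * A k / (H i * H k) - B k * H k / (H i) ^ 3 - B k * H i / (H k) ^ 3)
        = -(∑ l, R i l / H l) ^ 2 - 2 * (∑ l, (R i l) ^ 2) / (H i) ^ 2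
          + 2 * (∑ l, (R i l) ^ 2 / (H l) ^ 2)
          + 2 * H i * (∑ k, ∑ l, R i k * R k l / ((H k) ^ 2 * H l))
          - 4 * H i * (∑ p, R i p * R p p / (H p) ^ 3)) :
    ((∑ k ∈ univ.filter (fun k => k ≠ i), A k / (5760 * H i * H k))
        - (R i i) ^ 2 / (1440 * (H i) ^ 2)
        - (∑ k, (R i k) ^ 2 / (1920 * (H k) ^ 2))
        + ∑ k, R i i * R i k / (1440 * H i * H k))
      + ((∑ k ∈ univ.filter (fun k => k ≠ i), A k / (2880 * H i * H k))
        - (∑ k ∈ univ.filter (fun k => k ≠ i), B k * H k / (384 * (H i) ^ 3))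
        + (∑ k ∈ univ.filter (fun k => k ≠ i), 7 * B k / (2880 * H i * H k))
        - (∑ j, 17 * R i i * R i j / (2880 * H i * H j))
        + (∑ k, R i k * R k k * H i / (1440 * (H k) ^ 3))
        - (∑ k, 19 * (R i k) ^ 2 / (720 * (H i) ^ 2))
        + (∑ k, (R i k) ^ 2 / (1440 * (H k) ^ 2))
        + (∑ j, ∑ k, R i k * R i j / (2880 * H j * H k))
        + (∑ j, ∑ k, 7 * R i k * R j k / (2880 * H i * H j))
        - (∑ k, ∑ l, H i * R i l * R k l / (2880 * H k * (H l) ^ 2))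
        + 23 * (R i i) ^ 2 / (720 * (H i) ^ 2))
      = 0 := by
  simp only [Finset.filter_ne']
  have hHi := h0 i
  have hUi : ∑ j, R i j * R j i = ∑ l, (R i l) ^ 2 :=
    Finset.sum_congr rfl fun j _ => by rw [sym j i]; ring
  have hZi : ∑ l, R i l * R i l / (H l) ^ 2 = ∑ l, (R i l) ^ 2 / (H l) ^ 2 :=
    Finset.sum_congr rfl fun l _ => by ring
  have hXe : ∑ k ∈ univ.erase i, R i k * H k = -(R i i * H i) := by
    rw [erase_full, str i]; ring
  have hXe2 : ∑ k ∈ univ.erase i, R i k / H k = (∑ l, R i l / H l) - R i i / H i := by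
    rw [erase_full]
  have hR2e : ∑ k ∈ univ.erase i, (R i k) ^ 2 = (∑ l, (R i l) ^ 2) - (R i i) ^ 2 := by
    rw [erase_full]
  have hR2e2 : ∑ k ∈ univ.erase i, (R i k) ^ 2 / (H k) ^ 2
      = (∑ l, (R i l) ^ 2 / (H l) ^ 2) - (R i i) ^ 2 / (H i) ^ 2 := by
    rw [erase_full]
  have hT1 : ∑ k ∈ univ.erase i, H k * (∑ j, R i j * R j k)
      = -(H i * ∑ l, (R i l) ^ 2) := by
    rw [erase_full]
    have full : ∑ k, H k * (∑ j, R i j * R j k) = 0 := by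
      calc ∑ k, H k * (∑ j, R i j * R j k) = ∑ k, ∑ j, R i j * (R j k * H k) := by
            refine Finset.sum_congr rfl fun k _ => ?_
            rw [Finset.mul_sum]
            exact Finset.sum_congr rfl fun j _ => by ring
        _ = ∑ j, ∑ k, R i j * (R j k * H k) := Finset.sum_comm
        _ = ∑ j, R i j * (∑ k, R j k * H k) :=
            Finset.sum_congr rfl fun j _ => (Finset.mul_sum _ _ _).symm
        _ = 0 := Finset.sum_eq_zero fun j _ => by rw [str j, mul_zero]
    rw [full, hUi]; ring
  have hZc : ∑ k ∈ univ.erase i, H k * (∑ l, R i l * R k l / (H l) ^ 2)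
      = -(H i * ∑ l, (R i l) ^ 2 / (H l) ^ 2) := by
    rw [erase_full]
    have full : ∑ k, H k * (∑ l, R i l * R k l / (H l) ^ 2) = 0 := by
      calc ∑ k, H k * (∑ l, R i l * R k l / (H l) ^ 2)
            = ∑ k, ∑ l, (R i l / (H l) ^ 2) * (R l k * H k) := by
            refine Finset.sum_congr rfl fun k _ => ?_
            rw [Finset.mul_sum]
            refine Finset.sum_congr rfl fun l _ => ?_
            rw [sym k l]; ring
        _ = ∑ l, ∑ k, (R i l / (H l) ^ 2) * (R l k * H k) := Finset.sum_comm
        _ = ∑ l, (R i l / (H l) ^ 2) * (∑ k, R l k * H k) :=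
            Finset.sum_congr rfl fun l _ => (Finset.mul_sum _ _ _).symm
        _ = 0 := Finset.sum_eq_zero fun l _ => by rw [str l, mul_zero]
    rw [full, hZi]; ring
  have hMZ : ∑ k, (∑ l, R i l * R k l / (H l) ^ 2) / H k
      = ∑ k, ∑ l, R i l * R k l / (H k * (H l) ^ 2) := by
    refine Finset.sum_congr rfl fun k _ => ?_
    rw [Finset.sum_div]
    exact Finset.sum_congr rfl fun l _ => by ring
  have hM12' : ∑ k, R i k * (∑ l, R k l / H l) / (H k) ^ 2
      = ∑ k, ∑ l, R i k * R k l / ((H k) ^ 2 * H l) := by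
    refine Finset.sum_congr rfl fun k _ => ?_
    rw [Finset.mul_sum, Finset.sum_div]
    exact Finset.sum_congr rfl fun l _ => by ring
  have hYsum : ∑ k, R i k * (∑ l, R k l / H l) = ∑ j, (∑ k, R i k * R j k) / H j := by
    calc ∑ k, R i k * (∑ l, R k l / H l) = ∑ k, ∑ l, R i k * (R k l / H l) := by
          exact Finset.sum_congr rfl fun k _ => Finset.mul_sum _ _ _
      _ = ∑ l, ∑ k, R i k * (R k l / H l) := Finset.sum_comm
      _ = ∑ j, (∑ k, R i k * R j k) / H j := by
          refine Finset.sum_congr rfl fun l _ => ?_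
          rw [Finset.sum_div]
          refine Finset.sum_congr rfl fun k _ => ?_
          rw [sym k l]; ring
  have hM12M1 : ∑ k, ∑ l, R i k * R k l / ((H k) ^ 2 * H l)
      = ∑ k, ∑ l, R i l * R k l / (H k * (H l) ^ 2) := by
    rw [Finset.sum_comm]
    refine Finset.sum_congr rfl fun a _ => Finset.sum_congr rfl fun b _ => ?_
    rw [sym b a]; ring
  have hEk : ∀ k, ∑ l, (R i l * R k l * H i * H k / (H l) ^ 2
        - R i k * R i l * H k / H l - R i k * R k l * H i / H l)
      = H i * H k * (∑ l, R i l * R k l / (H l) ^ 2)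
        - R i k * H k * (∑ l, R i l / H l) - R i k * H i * (∑ l, R k l / H l) := by
    intro k
    calc ∑ l, (R i l * R k l * H i * H k / (H l) ^ 2
          - R i k * R i l * H k / H l - R i k * R k l * H i / H l)
        = ∑ l, (H i * H k * (R i l * R k l / (H l) ^ 2)
            - R i k * H k * (R i l / H l) - R i k * H i * (R k l / H l)) :=
          Finset.sum_congr rfl fun l _ => by ring
      _ = _ := by
          rw [Finset.sum_sub_distrib, Finset.sum_sub_distrib,
            ← Finset.mul_sum, ← Finset.mul_sum, ← Finset.mul_sum]
  have hTheta : (∑ k ∈ univ.erase i, A k / (5760 * H i * H k))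
      + (∑ k ∈ univ.erase i, A k / (2880 * H i * H k))
      + (∑ k ∈ univ.erase i, 7 * B k / (2880 * H i * H k))
      - (∑ k ∈ univ.erase i, B k * H k / (384 * (H i) ^ 3))
      = 7 / (2880 * (H i) ^ 3) * (∑ k ∈ univ.erase i, H k * (∑ j, R i j * R j k))
        + 7 / (2880 * (H i) ^ 2) * (∑ k ∈ univ.erase i,
            (12 * (R i k) ^ 2 + (H i * H k * (∑ l, R i l * R k l / (H l) ^ 2)
              - R i k * H k * (∑ l, R i l / H l) - R i k * H i * (∑ l, R k l / H l))))
        + 1 / 5760 * (∑ k ∈ univ.erase i,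
            (12 * (R i k) ^ 2 + (H i * H k * (∑ l, R i l * R k l / (H l) ^ 2)
              - R i k * H k * (∑ l, R i l / H l) - R i k * H i * (∑ l, R k l / H l))) / (H k) ^ 2)
        + 1 / 5760 * (∑ k ∈ univ.erase i,
            (2 * A k / (H i * H k) - B k * H k / (H i) ^ 3 - B k * H i / (H k) ^ 3)) := by
    rw [← Finset.sum_add_distrib, ← Finset.sum_add_distrib, ← Finset.sum_sub_distrib]
    have step2 : ∀ k ∈ univ.erase i,
        A k / (5760 * H i * H k) + A k / (2880 * H i * H k) + 7 * B k / (2880 * H i * H k)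
          - B k * H k / (384 * (H i) ^ 3)
        = 7 * H k / (2880 * (H i) ^ 3) * (∑ j, R i j * R j k)
          + (7 / (2880 * (H i) ^ 2) + 1 / (5760 * (H k) ^ 2))
              * (12 * (R i k) ^ 2 + (H i * H k * (∑ l, R i l * R k l / (H l) ^ 2)
                - R i k * H k * (∑ l, R i l / H l) - R i k * H i * (∑ l, R k l / H l)))
          + 1 / 5760 * (2 * A k / (H i * H k) - B k * H k / (H i) ^ 3 - B k * H i / (H k) ^ 3) := by
      intro k hk
      have hki : k ≠ i := (mem_erase.mp hk).1
      have g := G2 k hki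
      rw [hEk k] at g
      exact perk (H i) (H k) (A k) (B k) _ _ hHi (h0 k) (S k hki) g
    have pa : ∑ k ∈ univ.erase i, 7 * H k / (2880 * (H i) ^ 3) * (∑ j, R i j * R j k)
        = 7 / (2880 * (H i) ^ 3) * (∑ k ∈ univ.erase i, H k * (∑ j, R i j * R j k)) := by
      rw [Finset.mul_sum]
      exact Finset.sum_congr rfl fun k _ => by ring
    have pb : ∑ k ∈ univ.erase i, (7 / (2880 * (H i) ^ 2) + 1 / (5760 * (H k) ^ 2))
              * (12 * (R i k) ^ 2 + (H i * H k * (∑ l, R i l * R k l / (H l) ^ 2)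
                - R i k * H k * (∑ l, R i l / H l) - R i k * H i * (∑ l, R k l / H l)))
        = 7 / (2880 * (H i) ^ 2) * (∑ k ∈ univ.erase i,
            (12 * (R i k) ^ 2 + (H i * H k * (∑ l, R i l * R k l / (H l) ^ 2)
              - R i k * H k * (∑ l, R i l / H l) - R i k * H i * (∑ l, R k l / H l))))
          + 1 / 5760 * (∑ k ∈ univ.erase i,
            (12 * (R i k) ^ 2 + (H i * H k * (∑ l, R i l * R k l / (H l) ^ 2)
              - R i k * H k * (∑ l, R i l / H l) - R i k * H i * (∑ l, R k l / H l))) / (H k) ^ 2) := by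
      rw [Finset.mul_sum, Finset.mul_sum, ← Finset.sum_add_distrib]
      exact Finset.sum_congr rfl fun k _ => by ring
    have pc : ∑ k ∈ univ.erase i, 1 / 5760
          * (2 * A k / (H i * H k) - B k * H k / (H i) ^ 3 - B k * H i / (H k) ^ 3)
        = 1 / 5760 * (∑ k ∈ univ.erase i,
            (2 * A k / (H i * H k) - B k * H k / (H i) ^ 3 - B k * H i / (H k) ^ 3)) :=
      (Finset.mul_sum _ _ _).symm
    rw [Finset.sum_congr rfl step2, Finset.sum_add_distrib, Finset.sum_add_distrib, pa, pb, pc]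
    ring
  have hTE : ∑ k ∈ univ.erase i,
      (12 * (R i k) ^ 2 + (H i * H k * (∑ l, R i l * R k l / (H l) ^ 2)
        - R i k * H k * (∑ l, R i l / H l) - R i k * H i * (∑ l, R k l / H l)))
      = 12 * (∑ l, (R i l) ^ 2) - 12 * (R i i) ^ 2
        - (H i) ^ 2 * (∑ l, (R i l) ^ 2 / (H l) ^ 2)
        + 2 * R i i * H i * (∑ l, R i l / H l)
        - H i * (∑ j, (∑ k, R i k * R j k) / H j) := by
    rw [Finset.sum_add_distrib, Finset.sum_sub_distrib, Finset.sum_sub_distrib]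
    have ea : ∑ k ∈ univ.erase i, 12 * (R i k) ^ 2
        = 12 * ((∑ l, (R i l) ^ 2) - (R i i) ^ 2) := by
      rw [← hR2e, Finset.mul_sum]
    have eb : ∑ k ∈ univ.erase i, H i * H k * (∑ l, R i l * R k l / (H l) ^ 2)
        = H i * -(H i * ∑ l, (R i l) ^ 2 / (H l) ^ 2) := by
      rw [← hZc, Finset.mul_sum]
      exact Finset.sum_congr rfl fun k _ => by ring
    have ec : ∑ k ∈ univ.erase i, R i k * H k * (∑ l, R i l / H l)
        = (∑ l, R i l / H l) * -(R i i * H i) := by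
      rw [← hXe, Finset.mul_sum]
      exact Finset.sum_congr rfl fun k _ => by ring
    have ed : ∑ k ∈ univ.erase i, R i k * H i * (∑ l, R k l / H l)
        = H i * ((∑ j, (∑ k, R i k * R j k) / H j) - R i i * (∑ l, R i l / H l)) := by
      have e0 : ∑ k ∈ univ.erase i, R i k * H i * (∑ l, R k l / H l)
          = H i * ∑ k ∈ univ.erase i, R i k * (∑ l, R k l / H l) := by
        rw [Finset.mul_sum]
        exact Finset.sum_congr rfl fun k _ => by ring
      rw [e0, erase_full, hYsum]
    rw [ea, eb, ec, ed]
    ring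
  have hTE2 : ∑ k ∈ univ.erase i,
      (12 * (R i k) ^ 2 + (H i * H k * (∑ l, R i l * R k l / (H l) ^ 2)
        - R i k * H k * (∑ l, R i l / H l) - R i k * H i * (∑ l, R k l / H l))) / (H k) ^ 2
      = 12 * ((∑ l, (R i l) ^ 2 / (H l) ^ 2) - (R i i) ^ 2 / (H i) ^ 2)
        + H i * ((∑ k, ∑ l, R i l * R k l / (H k * (H l) ^ 2))
            - (∑ l, (R i l) ^ 2 / (H l) ^ 2) / H i)
        - (∑ l, R i l / H l) * ((∑ l, R i l / H l) - R i i / H i)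
        - H i * ((∑ k, ∑ l, R i k * R k l / ((H k) ^ 2 * H l))
            - R i i * (∑ l, R i l / H l) / (H i) ^ 2) := by
    have step : ∀ k ∈ univ.erase i,
        (12 * (R i k) ^ 2 + (H i * H k * (∑ l, R i l * R k l / (H l) ^ 2)
          - R i k * H k * (∑ l, R i l / H l) - R i k * H i * (∑ l, R k l / H l))) / (H k) ^ 2
        = 12 * (R i k) ^ 2 / (H k) ^ 2
          + H i * ((∑ l, R i l * R k l / (H l) ^ 2) / H k)
          - (∑ l, R i l / H l) * (R i k / H k)
          - H i * (R i k * (∑ l, R k l / H l) / (H k) ^ 2) := fun k _ => by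
      linear_combination E2div (H i) (H k) (R i k) (∑ l, R i l / H l)
        (∑ l, R i l * R k l / (H l) ^ 2) (∑ l, R k l / H l) (h0 k)
    rw [Finset.sum_congr rfl step, Finset.sum_sub_distrib, Finset.sum_sub_distrib,
      Finset.sum_add_distrib]
    have fa : ∑ k ∈ univ.erase i, 12 * (R i k) ^ 2 / (H k) ^ 2
        = 12 * ((∑ l, (R i l) ^ 2 / (H l) ^ 2) - (R i i) ^ 2 / (H i) ^ 2) := by
      rw [← hR2e2, Finset.mul_sum]
      exact Finset.sum_congr rfl fun k _ => by ring
    have fb : ∑ k ∈ univ.erase i, H i * ((∑ l, R i l * R k l / (H l) ^ 2) / H k)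
        = H i * ((∑ k, ∑ l, R i l * R k l / (H k * (H l) ^ 2))
            - (∑ l, (R i l) ^ 2 / (H l) ^ 2) / H i) := by
      rw [← Finset.mul_sum, erase_full, hMZ, hZi]
    have fc : ∑ k ∈ univ.erase i, (∑ l, R i l / H l) * (R i k / H k)
        = (∑ l, R i l / H l) * ((∑ l, R i l / H l) - R i i / H i) := by
      rw [← Finset.mul_sum, hXe2]
    have fd : ∑ k ∈ univ.erase i, H i * (R i k * (∑ l, R k l / H l) / (H k) ^ 2)
        = H i * ((∑ k, ∑ l, R i k * R k l / ((H k) ^ 2 * H l))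
            - R i i * (∑ l, R i l / H l) / (H i) ^ 2) := by
      rw [← Finset.mul_sum, erase_full, hM12']
    rw [fa, fb, fc, fd]
  -- goal atom conversions
  have hq2 : ∑ k, (R i k) ^ 2 / (1920 * (H k) ^ 2)
      = 1 / 1920 * (∑ l, (R i l) ^ 2 / (H l) ^ 2) := by
    rw [Finset.mul_sum]
    exact Finset.sum_congr rfl fun k _ => by ring
  have hq3 : ∑ k, R i i * R i k / (1440 * H i * H k)
      = R i i / (1440 * H i) * (∑ l, R i l / H l) := by
    rw [Finset.mul_sum]
    exact Finset.sum_congr rfl fun k _ => by ring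
  have hq4 : ∑ j, 17 * R i i * R i j / (2880 * H i * H j)
      = 17 * R i i / (2880 * H i) * (∑ l, R i l / H l) := by
    rw [Finset.mul_sum]
    exact Finset.sum_congr rfl fun k _ => by ring
  have hq5 : ∑ k, R i k * R k k * H i / (1440 * (H k) ^ 3)
      = H i / 1440 * (∑ p, R i p * R p p / (H p) ^ 3) := by
    rw [Finset.mul_sum]
    exact Finset.sum_congr rfl fun k _ => by ring
  have hq6 : ∑ k, 19 * (R i k) ^ 2 / (720 * (H i) ^ 2)
      = 19 / (720 * (H i) ^ 2) * (∑ l, (R i l) ^ 2) := by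
    rw [Finset.mul_sum]
    exact Finset.sum_congr rfl fun k _ => by ring
  have hq7 : ∑ k, (R i k) ^ 2 / (1440 * (H k) ^ 2)
      = 1 / 1440 * (∑ l, (R i l) ^ 2 / (H l) ^ 2) := by
    rw [Finset.mul_sum]
    exact Finset.sum_congr rfl fun k _ => by ring
  have hq8 : ∑ j, ∑ k, R i k * R i j / (2880 * H j * H k)
      = (∑ l, R i l / H l) / 2880 * (∑ l, R i l / H l) := by
    calc ∑ j, ∑ k, R i k * R i j / (2880 * H j * H k)
        = ∑ j, (R i j / (2880 * H j)) * (∑ l, R i l / H l) := by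
          refine Finset.sum_congr rfl fun j _ => ?_
          rw [Finset.mul_sum]
          exact Finset.sum_congr rfl fun k _ => by ring
      _ = (∑ j, R i j / (2880 * H j)) * (∑ l, R i l / H l) := by
          rw [Finset.sum_mul]
      _ = (∑ l, R i l / H l) / 2880 * (∑ l, R i l / H l) := by
          have : ∑ j, R i j / (2880 * H j) = (∑ l, R i l / H l) / 2880 := by
            rw [Finset.sum_div]
            exact Finset.sum_congr rfl fun j _ => by ring
          rw [this]
  have hq9 : ∑ j, ∑ k, 7 * R i k * R j k / (2880 * H i * H j)
      = 7 / (2880 * H i) * (∑ j, (∑ k, R i k * R j k) / H j) := by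
    rw [Finset.mul_sum]
    refine Finset.sum_congr rfl fun j _ => ?_
    rw [Finset.sum_div, Finset.mul_sum]
    exact Finset.sum_congr rfl fun k _ => by ring
  have hq10 : ∑ k, ∑ l, H i * R i l * R k l / (2880 * H k * (H l) ^ 2)
      = H i / 2880 * (∑ k, ∑ l, R i l * R k l / (H k * (H l) ^ 2)) := by
    rw [Finset.mul_sum]
    refine Finset.sum_congr rfl fun k _ => ?_
    rw [Finset.mul_sum]
    exact Finset.sum_congr rfl fun l _ => by ring
  have FS := final_scalar (H i) (R i i) (∑ l, R i l / H l) (∑ l, (R i l) ^ 2 / (H l) ^ 2)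
    (∑ l, (R i l) ^ 2) (∑ p, R i p * R p p / (H p) ^ 3) (∑ j, (∑ k, R i k * R j k) / H j)
    (∑ k, ∑ l, R i k * R k l / ((H k) ^ 2 * H l)) (∑ k, ∑ l, R i l * R k l / (H k * (H l) ^ 2))
    (∑ k ∈ univ.erase i, A k / (5760 * H i * H k))
    (∑ k ∈ univ.erase i, A k / (2880 * H i * H k))
    (∑ k ∈ univ.erase i, 7 * B k / (2880 * H i * H k))
    (∑ k ∈ univ.erase i, B k * H k / (384 * (H i) ^ 3))
    (∑ k ∈ univ.erase i, (2 * A k / (H i * H k) - B k * H k / (H i) ^ 3 - B k * H i / (H k) ^ 3))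
    (∑ k ∈ univ.erase i, H k * (∑ j, R i j * R j k))
    (∑ k ∈ univ.erase i,
        (12 * (R i k) ^ 2 + (H i * H k * (∑ l, R i l * R k l / (H l) ^ 2)
          - R i k * H k * (∑ l, R i l / H l) - R i k * H i * (∑ l, R k l / H l))))
    (∑ k ∈ univ.erase i,
        (12 * (R i k) ^ 2 + (H i * H k * (∑ l, R i l * R k l / (H l) ^ 2)
          - R i k * H k * (∑ l, R i l / H l) - R i k * H i * (∑ l, R k l / H l))) / (H k) ^ 2)
    hHi hM12M1 hTheta hT1 hTE hTE2 D
  linear_combination FS - hq2 + hq3 - hq4 + hq5 - hq6 + hq7 + hq8 + hq9 - hq10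



set_option maxHeartbeats 1600000 in
theorem Gi2_vanishes
    (N : ℕ) (hN : 2 ≤ N)
    (U : Set (Fin N → ℝ)) (hUopen : IsOpen U) (hUconn : IsConnected U)
    (hdist : ∀ x ∈ U, ∀ i j : Fin N, i ≠ j → x i ≠ x j)
    (h : Fin N → (Fin N → ℝ) → ℝ)
    (hsmooth : ∀ i, ContDiffOn ℝ (⊤ : ℕ∞) (h i) U)
    (hne : ∀ i, ∀ x ∈ U, h i x ≠ 0)
    (r : Fin N → Fin N → (Fin N → ℝ) → ℝ)
    (rsmooth : ∀ i j, ContDiffOn ℝ (⊤ : ℕ∞) (r i j) U)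
    (rsymm : ∀ i j, r i j = r j i)
    (hb : ∀ i j, ∀ x ∈ U, pd (h i) j x = r i j x * h j x)
    (hstring : ∀ i, ∀ x ∈ U, ∑ j, r i j x * h j x = 0)
    (v : Fin N → Fin N → (Fin N → ℝ) → ℝ)
    (hv : ∀ i j, ∀ x ∈ U, v i j x = (x j - x i) * r i j x)
    (θ : Fin N → Fin N → (Fin N → ℝ) → ℝ)
    (hθ : ∀ i j, i ≠ j → ∀ x ∈ U,
      θ i j x = (r i j x + ∑ k, r i k x * v j k x) / (x j - x i))
    (Ω : Fin N → Fin N → (Fin N → ℝ) → ℝ)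
    (hΩ : ∀ i j, i ≠ j → ∀ x ∈ U,
      Ω i j x = (θ i j x - θ j i x + ∑ k, ∑ l, r i l x * r j k x * v k l x) / (x j - x i))
    (hc : ∀ i j k : Fin N, i ≠ j → j ≠ k → i ≠ k → ∀ x ∈ U,
      pd (r i j) k x = r i k x * r j k x)
    (hd : ∀ i j, i ≠ j → ∀ x ∈ U, pd (r i j) i x = r i i x * r i j x + θ i j x)
    (he : ∀ i k, k ≠ i → ∀ x ∈ U,
      pd (r i i) k x = (r i k x) ^ 2 + (h k x / h i x) * θ i k x)
    (hf : ∀ i, ∀ x ∈ U, pd (r i i) i x =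
      (r i i x) ^ 2 - 2 * ∑ l, (r i l x) ^ 2
        + ∑ p ∈ univ.filter (fun p => p ≠ i), (h p x / h i x) * θ p i x)
    (hC1 : ∃ c : ℝ, ∀ x ∈ U,
      (∑ i, ∑ j, r i j x / (h i x * h j x)) - 2 * ∑ i, r i i x / (h i x) ^ 2 = c)
    (hG1 : ∀ i, ∀ x ∈ U,
      ∑ j, r i j x * v i j x = -(1/12) * ∑ j, r i j x * h i x / h j x)
    (hG2 : ∀ i j, i ≠ j → ∀ x ∈ U,
      θ i j x * h j x / h i x + θ j i x * h i x / h j x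
        = 12 * (r i j x) ^ 2
          + ∑ l, (r i l x * r j l x * h i x * h j x / (h l x) ^ 2
              - r i j x * r i l x * h j x / h l x - r i j x * r j l x * h i x / h l x))
    :
    ∀ i : Fin N, ∀ x ∈ U,
      ((∑ k ∈ univ.filter (fun k => k ≠ i), θ i k x / (5760 * h i x * h k x))
          - (r i i x) ^ 2 / (1440 * (h i x) ^ 2)
          - (∑ k, (r i k x) ^ 2 / (1920 * (h k x) ^ 2))
          + ∑ k, r i i x * r i k x / (1440 * h i x * h k x))
        + ((∑ k ∈ univ.filter (fun k => k ≠ i), θ i k x / (2880 * h i x * h k x))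
          - (∑ k ∈ univ.filter (fun k => k ≠ i), θ k i x * h k x / (384 * (h i x) ^ 3))
          + (∑ k ∈ univ.filter (fun k => k ≠ i), 7 * θ k i x / (2880 * h i x * h k x))
          - (∑ j, 17 * r i i x * r i j x / (2880 * h i x * h j x))
          + (∑ k, r i k x * r k k x * h i x / (1440 * (h k x) ^ 3))
          - (∑ k, 19 * (r i k x) ^ 2 / (720 * (h i x) ^ 2))
          + (∑ k, (r i k x) ^ 2 / (1440 * (h k x) ^ 2))
          + (∑ j, ∑ k, r i k x * r i j x / (2880 * h j x * h k x))
          + (∑ j, ∑ k, 7 * r i k x * r j k x / (2880 * h i x * h j x))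
          - (∑ k, ∑ l, h i x * r i l x * r k l x / (2880 * h k x * (h l x) ^ 2))
          + 23 * (r i i x) ^ 2 / (720 * (h i x) ^ 2))
      = 0 := by
  intro i x hx
  have hdh : ∀ p, DifferentiableAt ℝ (h p) x := fun p =>
    ((hsmooth p).differentiableOn (by simp)).differentiableAt (hUopen.mem_nhds hx)
  have hdr : ∀ p q, DifferentiableAt ℝ (r p q) x := fun p q =>
    ((rsmooth p q).differentiableOn (by simp)).differentiableAt (hUopen.mem_nhds hx)
  have h0 : ∀ p, (fun p => h p x) p ≠ 0 := fun p => hne p x hx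
  have symv : ∀ p q, r p q x = r q p x := fun p q => congrFun (rsymm p q) x
  -- S relations
  have hS : ∀ k, k ≠ i → θ i k x + θ k i x = -∑ j, r i j x * r j k x := by
    intro k hk
    have hzero : pd (fun y => ∑ j, r i j y * h j y) k x = 0 := by
      rw [pd_congr hUopen hx (g := fun _ => (0:ℝ)) (fun y hy => hstring i y hy)]
      exact pd_const 0
    have hexp : pd (fun y => ∑ j, r i j y * h j y) k x
        = ∑ j, (pd (r i j) k x * h j x + r i j x * (r j k x * h k x)) := by
      rw [pd_sum univ (fun j y => r i j y * h j y) (fun j _ => (hdr i j).mul (hdh j))]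
      refine Finset.sum_congr rfl fun j _ => ?_
      rw [pd_mul (hdr i j) (hdh j), hb j k x hx]
    have raw : ∑ j, (pd (r i j) k x * h j x + r i j x * (r j k x * h k x)) = 0 := by
      rw [← hexp]; exact hzero
    refine S_algebra hk (fun p => h p x) (fun p q => r p q x) (θ i k x) (θ k i x)
      (fun j => pd (r i j) k x) h0 symv (hstring k x hx) raw ?_ ?_ ?_
    · exact he i k hk x hx
    · have e1 : pd (r i k) k x = r k k x * r k i x + θ k i x := by
        rw [rsymm i k]; exact hd k i hk x hx
      rw [symv k i] at e1
      exact e1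
    · intro j hji hjk
      exact hc i j k (Ne.symm hji) hjk (Ne.symm hk) x hx
  -- D relation
  obtain ⟨c, hc1⟩ := hC1
  have dq : ∀ p q, DifferentiableAt ℝ (fun y => r p q y / (h p y * h q y)) x := fun p q =>
    diffAt_div (hdr p q) ((hdh p).mul (hdh q)) (mul_ne_zero (hne p x hx) (hne q x hx))
  have hzeroF : pd (fun y => (∑ p, ∑ q, r p q y / (h p y * h q y))
      - 2 * ∑ p, r p p y / (h p y * h p y)) i x = 0 := by
    rw [pd_congr hUopen hx (g := fun _ => c) ?_]
    · exact pd_const c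
    · intro y hy
      have e : ∑ p, r p p y / (h p y * h p y) = ∑ p, r p p y / (h p y) ^ 2 :=
        Finset.sum_congr rfl fun p _ => by rw [sq]
      rw [e]
      exact hc1 y hy
  have hexpF : pd (fun y => (∑ p, ∑ q, r p q y / (h p y * h q y))
      - 2 * ∑ p, r p p y / (h p y * h p y)) i x
      = (∑ p, ∑ q, pd (fun y => r p q y / (h p y * h q y)) i x)
        - 2 * ∑ p, pd (fun y => r p p y / (h p y * h p y)) i x := by
    have d1 : DifferentiableAt ℝ (fun y => ∑ p, ∑ q, r p q y / (h p y * h q y)) x :=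
      DifferentiableAt.fun_sum fun p _ => DifferentiableAt.fun_sum fun q _ => dq p q
    have d2 : DifferentiableAt ℝ (fun y => ∑ p, r p p y / (h p y * h p y)) x :=
      DifferentiableAt.fun_sum fun p _ => dq p p
    rw [pd_sub d1 (d2.const_mul 2), pd_const_mul 2 d2,
      pd_sum univ _ (fun p _ => DifferentiableAt.fun_sum fun q _ => dq p q),
      pd_sum univ _ (fun p _ => dq p p)]
    congr 1
    refine Finset.sum_congr rfl fun p _ => ?_
    exact pd_sum univ _ (fun q _ => dq p q)
  have cellval : ∀ p q, pd (fun y => r p q y / (h p y * h q y)) i x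
      = (pd (r p q) i x * (h p x * h q x)
          - r p q x * (r p i x * h i x * h q x + h p x * (r q i x * h i x)))
        / (h p x * h q x) ^ 2 := by
    intro p q
    rw [pd_div (g := fun y => h p y * h q y) (hdr p q) ((hdh p).mul (hdh q)) (mul_ne_zero (hne p x hx) (hne q x hx)),
      pd_mul (hdh p) (hdh q), hb p i x hx, hb q i x hx]
  have raw : (∑ p, ∑ q, (pd (r p q) i x / (h p x * h q x)
        - r p q x * r p i x * h i x / ((h p x) ^ 2 * h q x)
        - r p q x * r q i x * h i x / (h p x * (h q x) ^ 2)))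
      - 2 * ∑ p, (pd (r p p) i x / (h p x) ^ 2
        - 2 * r p p x * r p i x * h i x / (h p x) ^ 3) = 0 := by
    rw [← hzeroF, hexpF]
    congr 1
    · refine Finset.sum_congr rfl fun p _ => Finset.sum_congr rfl fun q _ => ?_
      rw [cellval p q]
      exact (cellconv _ _ _ _ _ _ _ (hne p x hx) (hne q x hx)).symm
    · congr 1
      refine Finset.sum_congr rfl fun p _ => ?_
      rw [cellval p p]
      exact (cellconvd _ _ _ _ _ (hne p x hx)).symm
  have hDfact : ∑ k ∈ univ.erase i, (2 * θ i k x / (h i x * h k x)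
        - θ k i x * h k x / (h i x) ^ 3 - θ k i x * h i x / (h k x) ^ 3)
      = -(∑ l, r i l x / h l x) ^ 2 - 2 * (∑ l, (r i l x) ^ 2) / (h i x) ^ 2
        + 2 * (∑ l, (r i l x) ^ 2 / (h l x) ^ 2)
        + 2 * h i x * (∑ k, ∑ l, r i k x * r k l x / ((h k x) ^ 2 * h l x))
        - 4 * h i x * (∑ p, r i p x * r p p x / (h p x) ^ 3) := by
    refine D_algebra i (fun p => h p x) (fun p q => r p q x) (fun k => θ i k x)
      (fun k => θ k i x) (fun p q => pd (r p q) i x) h0 symv ?_ ?_ ?_ ?_ ?_ raw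
    · have e := hf i x hx
      rw [Finset.filter_ne'] at e
      exact e
    · intro q hq
      exact hd i q (Ne.symm hq) x hx
    · intro p hp
      have e1 : pd (r p i) i x = r i i x * r i p x + θ i p x := by
        rw [rsymm p i]; exact hd i p (Ne.symm hp) x hx
      exact e1
    · intro p hp
      have e1 := he p i (Ne.symm hp) x hx
      rw [symv p i] at e1
      exact e1
    · intro p q hp hq hpq
      have e1 := hc p q i hpq hq hp x hx
      rw [symv p i, symv q i] at e1
      exact e1
  exact final_algebra i (fun p => h p x) (fun p q => r p q x) (fun k => θ i k x)
    (fun k => θ k i x) h0 symv (fun p => hstring p x hx) hS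
    (fun k hk => hG2 i k (Ne.symm hk) x hx) hDfact
end
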